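/- Let Φ: X ⊸ X be a contracting compact-valued multi-function on a complete metric space X with Lipschitz constant λ < 1. Then the fixed fractal 𝔽(Φ) = closure(⋃_{n∈ω} Φⁿ(Fix(Φ))) is nonempty and compact, and satisfies Φ(𝔽(Φ)) = 𝔽(Φ). -/

import Mathlib

open Set

/-- Image of a set under a set-valued map `Φ : X → Set X`. -/
def sImage {X : Type*} (Φ : X → Set X) (A : Set X) : Set X := ⋃ a ∈ A, Φ a

/-- Iterates `Φⁿ(A)`. -/
def sIter {X : Type*} (Φ : X → Set X) : ℕ → Set X → Set X
  | 0, A => A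
  | n + 1, A => sImage Φ (sIter Φ n A)

/-- Fixed points of a set-valued map. -/
def sFix {X : Type*} (Φ : X → Set X) : Set X := {x | x ∈ Φ x}

/-! The map `K ↦ Φ(K)` is a `λ`-contraction of the complete space of nonempty compact sets with
the Hausdorff metric, so it has a unique fixed point `K*`. A fixed point `x` of `Φ` lies in `K*`:
if `k ∈ K*` is nearest to `x`, then `d(x, K*) = d(x, Φ(K*)) ≤ d_H(Φ x, Φ k) ≤ λ d(x, K*)`.
Since `K*` is `Φ`-invariant, every `Φⁿ(Fix Φ)` lies in `K*`. Conversely, `Φ` has a fixed point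
`x₀` (Nadler), and `Φⁿ({x₀}) ⊆ Φⁿ(Fix Φ)` converges to `K*`, so `K*` lies in the closure
of `⋃ₙ Φⁿ(Fix Φ)`. Hence the fixed fractal is `K*`. -/

open Metric TopologicalSpace Filter Topology
open scoped NNReal

section SetValued

variable {X : Type*} {Φ : X → Set X}

theorem sImage_mono {A B : Set X} (h : A ⊆ B) : sImage Φ A ⊆ sImage Φ B :=
  biUnion_subset_biUnion_left h

theorem sIter_mono {A B : Set X} (h : A ⊆ B) (n : ℕ) : sIter Φ n A ⊆ sIter Φ n B := by
  induction n with
  | zero => exact h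
  | succ n ih => exact sImage_mono ih

theorem sIter_subset_of_sImage_subset {A C : Set X} (hC : sImage Φ C ⊆ C) (hA : A ⊆ C)
    (n : ℕ) : sIter Φ n A ⊆ C := by
  induction n with
  | zero => exact hA
  | succ n ih => exact (sImage_mono ih).trans hC

end SetValued

theorem IsCompact.sImage {X : Type*} [TopologicalSpace X] {K : Set X} (hK : IsCompact K)
    {F : X → NonemptyCompacts X} (hF : Continuous F) :
    IsCompact (sImage (fun x => (F x : Set X)) K) := by
  simpa [_root_.sImage] using Compacts.isCompact_biUnion_coe_of_isCompact
    (hK.image (NonemptyCompacts.continuous_toCompacts.comp hF))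

namespace TopologicalSpace.NonemptyCompacts

variable {X : Type*} [TopologicalSpace X]

def sImage (F : X → NonemptyCompacts X) (hF : Continuous F) (K : NonemptyCompacts X) :
    NonemptyCompacts X where
  carrier := _root_.sImage (fun x => (F x : Set X)) K
  isCompact' := K.isCompact.sImage hF
  nonempty' := by
    obtain ⟨x, hx⟩ := K.nonempty
    obtain ⟨y, hy⟩ := (F x).nonempty
    exact ⟨y, mem_biUnion hx hy⟩

theorem coe_sImage_iterate (F : X → NonemptyCompacts X) (hF : Continuous F) (n : ℕ)
    (K : NonemptyCompacts X) :
    ((sImage F hF)^[n] K : Set X) = sIter (fun x => (F x : Set X)) n K := by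
  induction n with
  | zero => rfl
  | succ n ih =>
    rw [Function.iterate_succ_apply', sIter, ← ih]
    rfl

theorem subset_closure_of_tendsto {ι : Type*} {l : Filter ι} [l.NeBot]
    {L : ι → NonemptyCompacts X} {C : NonemptyCompacts X} {U : Set X}
    (hL : Tendsto L l (𝓝 C)) (hLU : ∀ᶠ i in l, (L i : Set X) ⊆ U) :
    (C : Set X) ⊆ closure U :=
  (isClosed_subsets_of_isClosed isClosed_closure).mem_of_tendsto hL
    (hLU.mono fun _ h => h.trans subset_closure)

end TopologicalSpace.NonemptyCompacts

section Metric

variable {X : Type*} [MetricSpace X] {K : ℝ≥0} {F : X → NonemptyCompacts X}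

theorem LipschitzWith.nonemptyCompacts_sImage (hF : LipschitzWith K F) :
    LipschitzWith K (NonemptyCompacts.sImage F hF.continuous) := by
  have key : ∀ A B : NonemptyCompacts X, ∀ z ∈ sImage (fun x => (F x : Set X)) A,
      ∃ w ∈ sImage (fun x => (F x : Set X)) B, dist z w ≤ K * dist A B := by
    intro A B z hz
    obtain ⟨a, ha, hza⟩ := mem_iUnion₂.1 hz
    obtain ⟨b, hb, hab⟩ := B.isCompact.exists_infDist_eq_dist B.nonempty a
    obtain ⟨w, hw, hzw⟩ := (F b).isCompact.exists_infDist_eq_dist (F b).nonempty z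
    refine ⟨w, mem_biUnion hb hw, ?_⟩
    calc dist z w = infDist z (F b) := hzw.symm
      _ ≤ dist (F a) (F b) := infDist_le_hausdorffDist_of_mem hza (edist_ne_top (F a) (F b))
      _ ≤ K * dist a b := hF.dist_le_mul a b
      _ ≤ K * dist A B := by
        rw [← hab]
        gcongr
        exact infDist_le_hausdorffDist_of_mem ha (edist_ne_top A B)
  refine LipschitzWith.of_dist_le_mul fun A B =>
    hausdorffDist_le_of_mem_dist (by positivity) (key A B) fun w hw => ?_
  obtain ⟨z, hz, h⟩ := key B A w hw
  exact ⟨z, hz, by rwa [dist_comm B A] at h⟩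

theorem isClosed_setOf_mem_apply (hF : Continuous F) : IsClosed {p : X × X | p.2 ∈ F p.1} := by
  have hdist : Continuous fun p : X × X => infDist p.2 (F p.1) :=
    lipschitz_infDist.continuous.comp (f := fun p : X × X => (p.2, F p.1)) (by fun_prop)
  have hzero : {p : X × X | p.2 ∈ F p.1} = {p | infDist p.2 (F p.1) = 0} := by
    ext p
    exact (F p.1).isCompact.isClosed.mem_iff_infDist_zero (F p.1).nonempty
  rw [hzero]
  exact isClosed_eq hdist continuous_const

/-- Nadler's fixed point theorem. -/
theorem exists_mem_self_of_lipschitzWith [CompleteSpace X] [Nonempty X] (hF : LipschitzWith K F)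
    (hK : K < 1) : ∃ x, x ∈ F x := by
  choose f hf_mem hf_dist using fun x => (F x).isCompact.exists_infDist_eq_dist (F x).nonempty x
  have hstep : ∀ x, dist (f x) (f (f x)) ≤ K * dist x (f x) := fun x =>
    calc dist (f x) (f (f x)) = infDist (f x) (F (f x)) := (hf_dist _).symm
      _ ≤ dist (F x) (F (f x)) :=
        infDist_le_hausdorffDist_of_mem (hf_mem x) (edist_ne_top (F x) (F (f x)))
      _ ≤ K * dist x (f x) := hF.dist_le_mul _ _
  set x₀ := Classical.arbitrary X
  have hgeom : ∀ n, dist (f^[n] x₀) (f^[n + 1] x₀) ≤ dist x₀ (f x₀) * K ^ n := by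
    intro n
    induction n with
    | zero => simp
    | succ n ih =>
      rw [Function.iterate_succ_apply' f (n + 1), Function.iterate_succ_apply' f n] at *
      calc _ ≤ K * dist (f^[n] x₀) (f (f^[n] x₀)) := hstep _
        _ ≤ K * (dist x₀ (f x₀) * K ^ n) := by gcongr
        _ = dist x₀ (f x₀) * K ^ (n + 1) := by ring
  obtain ⟨x, hx⟩ := cauchySeq_tendsto_of_complete (cauchySeq_of_le_geometric _ _ hK hgeom)
  refine ⟨x, (isClosed_setOf_mem_apply hF.continuous).mem_of_tendsto
    (hx.prodMk_nhds (hx.comp (tendsto_add_atTop_nat 1))) (Eventually.of_forall fun n => ?_)⟩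
  simpa [Function.iterate_succ_apply'] using hf_mem (f^[n] x₀)

theorem sFix_subset_of_sImage_eq (hF : LipschitzWith K F) (hK : K < 1) {C : NonemptyCompacts X}
    (hC : NonemptyCompacts.sImage F hF.continuous C = C) :
    sFix (fun x => (F x : Set X)) ⊆ C := by
  intro x hx
  obtain ⟨c, hc, hxc⟩ := C.isCompact.exists_infDist_eq_dist C.nonempty x
  have hle : infDist x C ≤ K * infDist x C :=
    calc infDist x C = infDist x (NonemptyCompacts.sImage F hF.continuous C) := by rw [hC]
      _ ≤ infDist x (F c) := infDist_le_infDist_of_subset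
        (subset_biUnion_of_mem (u := fun x => (F x : Set X)) hc) (F c).nonempty
      _ ≤ dist (F x) (F c) := infDist_le_hausdorffDist_of_mem hx (edist_ne_top (F x) (F c))
      _ ≤ K * dist x c := hF.dist_le_mul x c
      _ = K * infDist x C := by rw [hxc]
  have hzero : infDist x C = 0 := by
    nlinarith [infDist_nonneg (x := x) (s := (C : Set X)), show (K : ℝ) < 1 from hK]
  exact (C.isCompact.isClosed.mem_iff_infDist_zero C.nonempty).2 hzero

end Metric

theorem stmt9 {X : Type*} [MetricSpace X] [CompleteSpace X] [Nonempty X]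
    (Φ : X → Set X) (lam : ℝ) (hlam0 : 0 ≤ lam) (hlam : lam < 1)
    (hc : ∀ x, IsCompact (Φ x)) (hne : ∀ x, (Φ x).Nonempty)
    (hlip : ∀ x y, Metric.hausdorffDist (Φ x) (Φ y) ≤ lam * dist x y) :
    (closure (⋃ n, sIter Φ n (sFix Φ))).Nonempty ∧
    IsCompact (closure (⋃ n, sIter Φ n (sFix Φ))) ∧
    sImage Φ (closure (⋃ n, sIter Φ n (sFix Φ))) = closure (⋃ n, sIter Φ n (sFix Φ)) := by
  set F : X → NonemptyCompacts X := fun x => ⟨⟨Φ x, hc x⟩, hne x⟩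
  have hK : lam.toNNReal < 1 := by simpa [← NNReal.coe_lt_coe, hlam0] using hlam
  have hF : LipschitzWith lam.toNNReal F := LipschitzWith.of_dist_le_mul fun x y => by
    rw [Real.coe_toNNReal _ hlam0]
    exact hlip x y
  set S := NonemptyCompacts.sImage F hF.continuous
  have hS : ContractingWith lam.toNNReal S := ⟨hK, hF.nonemptyCompacts_sImage⟩
  set C := ContractingWith.fixedPoint S hS
  have hC : S C = C := hS.fixedPoint_isFixedPt
  obtain ⟨x₀, hx₀⟩ : (sFix Φ).Nonempty := exists_mem_self_of_lipschitzWith hF hK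
  have hsub : ⋃ n, sIter Φ n (sFix Φ) ⊆ C := iUnion_subset fun n =>
    sIter_subset_of_sImage_subset (congrArg SetLike.coe hC).le
      (sFix_subset_of_sImage_eq hF hK hC) n
  have hsup : (C : Set X) ⊆ closure (⋃ n, sIter Φ n (sFix Φ)) := by
    refine NonemptyCompacts.subset_closure_of_tendsto (hS.tendsto_iterate_fixedPoint {x₀})
      (Eventually.of_forall fun n => ?_)
    rw [NonemptyCompacts.coe_sImage_iterate]
    exact subset_iUnion_of_subset n (sIter_mono (singleton_subset_iff.2 hx₀) n)
  rw [(closure_minimal hsub C.isCompact.isClosed).antisymm hsup]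
  exact ⟨C.nonempty, C.isCompact, congrArg SetLike.coe hC⟩
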